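/- arXiv:1208.5052 — 3 statements merged into one kernel-verified Lean document; each statement's English description precedes it below -/
import Mathlib

section
/- The cluster variation of information v(a,b) = H_a + H_b - 2 I_{ab} is non-negative, where H_a = -(n_a/N) log(n_a/N), H_b = -(n_b/N) log(n_b/N), and I_{ab} = (n_{ab}/N) log(n_{ab} N / (n_a n_b)), for any positive integers n_a, n_b ≤ N and overlap 0 ≤ n_{ab} ≤ min(n_a, n_b). -/
/-! With `x = n_a/N`, `y = n_b/N`, `z = n_{ab}/N` we have `0 < z ≤ min x y` and `x, y ≤ 1`
(the case `n_{ab} = 0` is just `H_a, H_b ≥ 0`). Splitting `2 z log (z / (x y))` as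
`z log (z / x²) + z log (z / y²)`, it suffices that `z log (z / x²) ≤ -x log x`, and indeed
`z log z ≤ z log x` and `-z log x ≤ -x log x` since `log x ≤ 0`. -/

open Real

lemma Real.mul_log_div_sq_le_negMulLog {x z : ℝ} (hz : 0 < z) (hzx : z ≤ x) (hx : x ≤ 1) :
    z * log (z / x ^ 2) ≤ negMulLog x := by
  have hx0 : 0 < x := hz.trans_le hzx
  have hlogx : log x ≤ 0 := log_nonpos hx0.le hx
  calc z * log (z / x ^ 2) = z * log z - 2 * (z * log x) := by
        rw [log_div hz.ne' (by positivity), log_pow]; push_cast; ring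
    _ ≤ z * log x - 2 * (z * log x) := by gcongr
    _ = z * -log x := by ring
    _ ≤ x * -log x := by gcongr; linarith
    _ = negMulLog x := by rw [negMulLog]; ring

lemma Real.two_mul_mul_log_div_mul_le_negMulLog_add {x y z : ℝ} (hz : 0 < z)
    (hzx : z ≤ x) (hzy : z ≤ y) (hx : x ≤ 1) (hy : y ≤ 1) :
    2 * (z * log (z / (x * y))) ≤ negMulLog x + negMulLog y := by
  have hx0 : 0 < x := hz.trans_le hzx
  have hy0 : 0 < y := hz.trans_le hzy
  have hsplit : 2 * (z * log (z / (x * y))) = z * log (z / x ^ 2) + z * log (z / y ^ 2) := by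
    simp only [log_div hz.ne' (by positivity : x * y ≠ 0),
      log_div hz.ne' (by positivity : x ^ 2 ≠ 0),
      log_div hz.ne' (by positivity : y ^ 2 ≠ 0), log_mul hx0.ne' hy0.ne', log_pow]
    push_cast; ring
  rw [hsplit]
  exact add_le_add (mul_log_div_sq_le_negMulLog hz hzx hx) (mul_log_div_sq_le_negMulLog hz hzy hy)

theorem cvi_nonneg_general (N na nb nab : ℕ)
    (hnaN : na ≤ N) (hnbN : nb ≤ N)
    (hab : nab ≤ min na nb) :
    0 ≤ (-((na : ℝ) / N) * Real.log ((na : ℝ) / N)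
        + -((nb : ℝ) / N) * Real.log ((nb : ℝ) / N)
        - 2 * (if nab = 0 then 0 else
            ((nab : ℝ) / N) * Real.log ((nab : ℝ) * N / ((na : ℝ) * nb)))) := by
  have hx : (na : ℝ) / N ≤ 1 := div_le_one_of_le₀ (by exact_mod_cast hnaN) N.cast_nonneg
  have hy : (nb : ℝ) / N ≤ 1 := div_le_one_of_le₀ (by exact_mod_cast hnbN) N.cast_nonneg
  change 0 ≤ negMulLog _ + negMulLog _ - _
  split_ifs with h0
  · linarith [negMulLog_nonneg (by positivity) hx, negMulLog_nonneg (by positivity) hy]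
  · have hnab : 0 < nab := Nat.pos_of_ne_zero h0
    have hnab_na : nab ≤ na := hab.trans (min_le_left _ _)
    have hnab_nb : nab ≤ nb := hab.trans (min_le_right _ _)
    have hN : (0 : ℝ) < N := by exact_mod_cast hnab.trans_le (hnab_na.trans hnaN)
    have hzx : (nab : ℝ) / N ≤ na / N := by gcongr
    have hzy : (nab : ℝ) / N ≤ nb / N := by gcongr
    rw [show (nab : ℝ) * N / (na * nb) = (nab / N) / ((na / N) * (nb / N)) by field_simp]
    linarith [two_mul_mul_log_div_mul_le_negMulLog_add (by positivity) hzx hzy hx hy]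

/-- The cluster variation of information `v(a,b) = H_a + H_b - 2 I_{ab}` is non-negative. -/
theorem cvi_nonneg (N na nb nab : ℕ)
    (hna : 0 < na) (hnaN : na ≤ N) (hnb : 0 < nb) (hnbN : nb ≤ N)
    (hab : nab ≤ min na nb) :
    0 ≤ (-((na : ℝ) / N) * Real.log ((na : ℝ) / N)
        + -((nb : ℝ) / N) * Real.log ((nb : ℝ) / N)
        - 2 * (if nab = 0 then 0 else
            ((nab : ℝ) / N) * Real.log ((nab : ℝ) * N / ((na : ℝ) * nb)))) :=
  cvi_nonneg_general N na nb nab hnaN hnbN hab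
end

section
/- CNMI is at most 1: for clusters a, b with 0 < n_a ≤ N, 0 < n_b ≤ N, 0 < n_{ab} ≤ min(n_a,n_b), and n_a log(N/n_a) + n_b log(N/n_b) > 0, one has u(a,b) ≤ 1, with equality if and only if n_a = n_b = n_{ab}. -/
/-!
Write `v = n_a log(N/n_a) + n_b log(N/n_b) - 2 n_ab log(n_ab N/(n_a n_b))` (the CVI), so that
`u = 1 - v / (n_a log(N/n_a) + n_b log(N/n_b))`. Regrouping the logarithms,
`v = [(n_a - n_ab) log(N/n_a) + n_ab log(n_a/n_ab)] + [the same with n_b]`,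
and both brackets are sums of non-negative terms because `n_ab ≤ n_a ≤ N`; the second summand of a
bracket vanishes only when `n_a = n_ab`.
-/

open Real

noncomputable def cvi (N a b c : ℝ) : ℝ :=
  a * log (N / a) + b * log (N / b) - 2 * c * log (c * N / (a * b))

noncomputable def cviTerm (N a c : ℝ) : ℝ :=
  (a - c) * log (N / a) + c * log (a / c)

section

variable {N a b c : ℝ}

theorem cviTerm_summands_nonneg (hc : 0 < c) (hca : c ≤ a) (haN : a ≤ N) :
    0 ≤ (a - c) * log (N / a) ∧ 0 ≤ c * log (a / c) :=
  ⟨mul_nonneg (sub_nonneg.mpr hca) (log_nonneg ((one_le_div (hc.trans_le hca)).mpr haN)),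
    mul_nonneg hc.le (log_nonneg ((one_le_div hc).mpr hca))⟩

theorem cviTerm_nonneg (hc : 0 < c) (hca : c ≤ a) (haN : a ≤ N) : 0 ≤ cviTerm N a c :=
  add_nonneg (cviTerm_summands_nonneg hc hca haN).1 (cviTerm_summands_nonneg hc hca haN).2

theorem cviTerm_eq_zero_iff (hc : 0 < c) (hca : c ≤ a) (haN : a ≤ N) :
    cviTerm N a c = 0 ↔ a = c := by
  obtain ⟨h₁, h₂⟩ := cviTerm_summands_nonneg hc hca haN
  rw [cviTerm, add_eq_zero_iff_of_nonneg h₁ h₂]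
  constructor
  · rintro ⟨-, h⟩
    have hlog : log (a / c) = 0 := (mul_eq_zero.mp h).resolve_left hc.ne'
    exact (hca.eq_or_lt.resolve_right fun hlt => (log_pos ((one_lt_div hc).mpr hlt)).ne' hlog).symm
  · rintro rfl
    simp

theorem cvi_eq_cviTerm_add (hN : 0 < N) (ha : 0 < a) (hb : 0 < b) (hc : 0 < c) :
    cvi N a b c = cviTerm N a c + cviTerm N b c := by
  unfold cvi cviTerm
  rw [log_div hN.ne' ha.ne', log_div hN.ne' hb.ne', log_div ha.ne' hc.ne', log_div hb.ne' hc.ne',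
    log_div (by positivity) (by positivity), log_mul hc.ne' hN.ne', log_mul ha.ne' hb.ne']
  ring

theorem cvi_nonneg_s7 (hc : 0 < c) (hca : c ≤ a) (hcb : c ≤ b) (haN : a ≤ N) (hbN : b ≤ N) :
    0 ≤ cvi N a b c := by
  rw [cvi_eq_cviTerm_add (by linarith) (by linarith) (by linarith) hc]
  exact add_nonneg (cviTerm_nonneg hc hca haN) (cviTerm_nonneg hc hcb hbN)

theorem cvi_eq_zero_iff (hc : 0 < c) (hca : c ≤ a) (hcb : c ≤ b) (haN : a ≤ N) (hbN : b ≤ N) :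
    cvi N a b c = 0 ↔ a = c ∧ b = c := by
  rw [cvi_eq_cviTerm_add (by linarith) (by linarith) (by linarith) hc,
    add_eq_zero_iff_of_nonneg (cviTerm_nonneg hc hca haN) (cviTerm_nonneg hc hcb hbN),
    cviTerm_eq_zero_iff hc hca haN, cviTerm_eq_zero_iff hc hcb hbN]

end

theorem cnmi_le_one_general (N na nb nab : ℕ)
    (hnaN : na ≤ N) (hnbN : nb ≤ N)
    (hab0 : 0 < nab) (hab : nab ≤ min na nb)
    (hden : 0 < (na : ℝ) * Real.log ((N : ℝ) / na) + (nb : ℝ) * Real.log ((N : ℝ) / nb)) :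
    (2 * (nab : ℝ) * Real.log ((nab : ℝ) * N / ((na : ℝ) * nb)))
        / ((na : ℝ) * Real.log ((N : ℝ) / na) + (nb : ℝ) * Real.log ((N : ℝ) / nb)) ≤ 1
    ∧ ((2 * (nab : ℝ) * Real.log ((nab : ℝ) * N / ((na : ℝ) * nb)))
        / ((na : ℝ) * Real.log ((N : ℝ) / na) + (nb : ℝ) * Real.log ((N : ℝ) / nb)) = 1
      ↔ na = nb ∧ nb = nab) := by
  obtain ⟨hca, hcb⟩ := le_min_iff.mp hab
  have hc : (0 : ℝ) < nab := by exact_mod_cast hab0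
  have hca' : (nab : ℝ) ≤ na := by exact_mod_cast hca
  have hcb' : (nab : ℝ) ≤ nb := by exact_mod_cast hcb
  have haN : (na : ℝ) ≤ N := by exact_mod_cast hnaN
  have hbN : (nb : ℝ) ≤ N := by exact_mod_cast hnbN
  have hnum : 2 * (nab : ℝ) * log ((nab : ℝ) * N / ((na : ℝ) * nb))
      = (na : ℝ) * log ((N : ℝ) / na) + (nb : ℝ) * log ((N : ℝ) / nb) - cvi N na nb nab := by
    unfold cvi; ring
  rw [hnum, div_le_one hden, div_eq_one_iff_eq hden.ne', sub_eq_self,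
    cvi_eq_zero_iff hc hca' hcb' haN hbN]
  refine ⟨sub_le_self _ (cvi_nonneg_s7 hc hca' hcb' haN hbN), ?_⟩
  norm_cast
  exact ⟨fun ⟨hac, hbc⟩ => ⟨hac.trans hbc.symm, hbc⟩, fun ⟨hanb, hbc⟩ => ⟨hanb.trans hbc, hbc⟩⟩

/-- CNMI is at most `1`, with equality if and only if the two clusters coincide. -/
theorem cnmi_le_one (N na nb nab : ℕ)
    (hna : 0 < na) (hnaN : na ≤ N) (hnb : 0 < nb) (hnbN : nb ≤ N)
    (hab0 : 0 < nab) (hab : nab ≤ min na nb)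
    (hden : 0 < (na : ℝ) * Real.log ((N : ℝ) / na) + (nb : ℝ) * Real.log ((N : ℝ) / nb)) :
    (2 * (nab : ℝ) * Real.log ((nab : ℝ) * N / ((na : ℝ) * nb)))
        / ((na : ℝ) * Real.log ((N : ℝ) / na) + (nb : ℝ) * Real.log ((N : ℝ) / nb)) ≤ 1
    ∧ ((2 * (nab : ℝ) * Real.log ((nab : ℝ) * N / ((na : ℝ) * nb)))
        / ((na : ℝ) * Real.log ((N : ℝ) / na) + (nb : ℝ) * Real.log ((N : ℝ) / nb)) = 1
      ↔ na = nb ∧ nb = nab) :=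
  cnmi_le_one_general N na nb nab hnaN hnbN hab0 hab hden
end

section
/- For a fixed cluster pair with positive overlap, the mutual information contribution I_{ab} = (n_{ab}/N)log(n_{ab}N/(n_a n_b)) satisfies 2 I_{ab} ≤ H_a + H_b, i.e., the CVI non-negativity is equivalent to the bound I_{ab} ≤ (H_a + H_b)/2. -/
lemma cluster_mi_le_entropy_aux (N na nb nab : ℝ) (hN : 0 < N)
    (hna : 0 < na) (hnaN : na ≤ N) (hnb : 0 < nb)
    (hab0 : 0 < nab) (h1 : nab ≤ na) (h2 : nab ≤ nb) :
    (nab / N) * Real.log (nab * N / (na * nb))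
      ≤ -(na / N) * Real.log (na / N) := by
  have hsplit : nab * N / (na * nb) = (nab / nb) * (N / na) := by
    field_simp
  have hlog : Real.log (nab * N / (na * nb))
      = Real.log (nab / nb) + Real.log (N / na) := by
    rw [hsplit, Real.log_mul (by positivity) (by positivity)]
  have h3 : Real.log (nab / nb) ≤ 0 :=
    Real.log_nonpos (by positivity) (by rw [div_le_one hnb]; exact h2)
  have h4 : (0:ℝ) ≤ Real.log (N / na) :=
    Real.log_nonneg (by rw [le_div_iff₀ hna]; linarith)
  have h5 : -(na / N) * Real.log (na / N) = (na / N) * Real.log (N / na) := by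
    rw [show na / N = (N / na)⁻¹ by field_simp, Real.log_inv]; ring
  rw [hlog, h5]
  have hA : (nab / N) * (Real.log (nab / nb) + Real.log (N / na))
      ≤ (nab / N) * Real.log (N / na) := by
    apply mul_le_mul_of_nonneg_left (by linarith) (by positivity)
  have hB : (nab / N) * Real.log (N / na) ≤ (na / N) * Real.log (N / na) := by
    apply mul_le_mul_of_nonneg_right _ h4
    gcongr
  linarith

/-- The mutual information contribution of a cluster pair is at most the average of
the entropy contributions: `I_{ab} ≤ (H_a + H_b)/2`. -/
theorem cluster_mi_le_avg_entropy (N na nb nab : ℕ)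
    (hna : 0 < na) (hnaN : na ≤ N) (hnb : 0 < nb) (hnbN : nb ≤ N)
    (hab0 : 0 < nab) (hab : nab ≤ min na nb) :
    ((nab : ℝ) / N) * Real.log ((nab : ℝ) * N / ((na : ℝ) * nb))
      ≤ (-((na : ℝ) / N) * Real.log ((na : ℝ) / N)
          + -((nb : ℝ) / N) * Real.log ((nb : ℝ) / N)) / 2 := by
  have hN : (0:ℝ) < N := by exact_mod_cast lt_of_lt_of_le hna hnaN
  have h1 : (nab:ℝ) ≤ na := by exact_mod_cast hab.trans (min_le_left _ _)
  have h2 : (nab:ℝ) ≤ nb := by exact_mod_cast hab.trans (min_le_right _ _)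
  have ha := cluster_mi_le_entropy_aux N na nb nab hN (by exact_mod_cast hna)
    (by exact_mod_cast hnaN) (by exact_mod_cast hnb) (by exact_mod_cast hab0) h1 h2
  have hb := cluster_mi_le_entropy_aux N nb na nab hN (by exact_mod_cast hnb)
    (by exact_mod_cast hnbN) (by exact_mod_cast hna) (by exact_mod_cast hab0) h2 h1
  have hcomm : (nab:ℝ) * N / ((nb:ℝ) * na) = (nab:ℝ) * N / ((na:ℝ) * nb) := by ring_nf
  rw [hcomm] at hb
  linarith
end
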